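/- arXiv:2602.14195 — 3 statements merged into one kernel-verified Lean document; each statement's English description precedes it below -/
import Mathlib

section
/- Let ω = γ₁e₁ + γ₂e₂ be a bicomplex algebraic number with γ₁, γ₂ complex algebraic numbers. If the minimal polynomials of γ₁ and γ₂ over ℚ are equal, the minimal polynomial of ω over ℚ equals this common polynomial; if they are distinct (hence coprime irreducible), the minimal polynomial of ω over ℚ is their product. -/
/-! A polynomial kills `(γ₁, γ₂)` iff it kills both coordinates, so the minimal polynomial of the
pair is the monic lcm of those of `γ₁` and `γ₂`. Equal minimal polynomials give the lcm back;
distinct ones are distinct monic irreducibles, hence coprime, and their lcm is their product. -/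

open Polynomial

theorem lcm_eq_normalize_mul_of_isCoprime {α : Type*} [CommRing α] [NormalizedGCDMonoid α]
    {a b : α} (h : IsCoprime a b) : lcm a b = normalize (a * b) :=
  lcm_eq_normalize (lcm_dvd (dvd_mul_right a b) (dvd_mul_left b a))
    (h.mul_dvd (dvd_lcm_left a b) (dvd_lcm_right a b))

namespace minpoly

variable {K A B : Type*} [Field K] [Ring A] [Ring B] [Algebra K A] [Algebra K B]

theorem prodMk_dvd_iff (a : A) (b : B) {p : K[X]} :
    minpoly K (a, b) ∣ p ↔ minpoly K a ∣ p ∧ minpoly K b ∣ p := by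
  simp only [dvd_iff, aeval_prod_apply, Prod.mk_eq_zero]

section

variable [DecidableEq K]

theorem normalize_eq_self (x : A) : normalize (minpoly K x) = minpoly K x := by
  by_cases hx : IsIntegral K x
  · exact (monic hx).normalize_eq_self
  · rw [eq_zero hx, normalize_zero]

theorem prodMk_eq_lcm (a : A) (b : B) : minpoly K (a, b) = lcm (minpoly K a) (minpoly K b) :=
  dvd_antisymm_of_normalize_eq (normalize_eq_self _) (normalize_lcm _ _)
    ((prodMk_dvd_iff a b).2 ⟨dvd_lcm_left _ _, dvd_lcm_right _ _⟩)
    (lcm_dvd_iff.2 ((prodMk_dvd_iff a b).1 dvd_rfl))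

end

theorem isCoprime_of_ne [IsDomain A] [IsDomain B] {x : A} {y : B} (hx : IsIntegral K x)
    (hy : IsIntegral K y) (hne : minpoly K x ≠ minpoly K y) : IsCoprime (minpoly K x) (minpoly K y) := by
  rw [(minpoly.irreducible hx).coprime_iff_not_dvd]
  intro hdvd
  have hy_root : Polynomial.aeval x (minpoly K y) = 0 := dvd_iff.1 hdvd
  exact hne (eq_of_irreducible_of_monic (minpoly.irreducible hy) hy_root (monic hy)).symm

end minpoly

/-- Minimal polynomial of a bicomplex algebraic number `ω = (γ₁, γ₂)`: if the
minimal polynomials of `γ₁` and `γ₂` agree then it is their common value,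
otherwise it is their product. -/
theorem bicomplex_minpoly (γ₁ γ₂ : ℂ) (h₁ : IsAlgebraic ℚ γ₁) (h₂ : IsAlgebraic ℚ γ₂) :
    (minpoly ℚ γ₁ = minpoly ℚ γ₂ →
        minpoly ℚ ((γ₁, γ₂) : ℂ × ℂ) = minpoly ℚ γ₁) ∧
    (minpoly ℚ γ₁ ≠ minpoly ℚ γ₂ →
        minpoly ℚ ((γ₁, γ₂) : ℂ × ℂ) = minpoly ℚ γ₁ * minpoly ℚ γ₂) := by
  rw [minpoly.prodMk_eq_lcm]
  refine ⟨fun heq => ?_, fun hne => ?_⟩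
  · rw [← heq, lcm_same, minpoly.normalize_eq_self]
  · rw [lcm_eq_normalize_mul_of_isCoprime (minpoly.isCoprime_of_ne h₁.isIntegral h₂.isIntegral hne)]
    exact ((minpoly.monic h₁.isIntegral).mul (minpoly.monic h₂.isIntegral)).normalize_eq_self
end

section
/- Let P ∈ ℚ[X] be a separable monic polynomial of degree n with r real roots and 2s non-real complex roots (n = r + 2s), and consider its n² bicomplex roots in 𝔹 = ℂ × ℂ. Then: exactly r roots are real (both components equal and real), exactly r(r−1) roots are non-real hyperbolic (both components real but distinct), exactly 2s roots lie in ℂ·e₁+ℂ·e₂ with equal components and non-real (the diagonal copy of ℂ), exactly 2s roots have components that are complex conjugates of each other and non-real, and the remaining 4s(s+r−1) roots fall in none of these classes. -/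
/-! The complex roots of `P` form a finite set `A` of size `n = r + 2s`, stable under conjugation.
The real and the non-real hyperbolic bicomplex roots are the diagonal and the off-diagonal of the
`r` real roots; the two remaining named classes are the graphs of `id` and of `conj` over the `2s`
non-real roots, disjoint because `conj α = α` forces `α` to be real. With the `r²` pairs of real
roots these classes partition `A × A` together with the unclassified pairs, which therefore number
`n² - r² - 4s = 4s(s + r - 1)`. -/

open Polynomial ComplexConjugate

theorem Set.ncard_offDiag {α : Type*} {s : Set α} (hs : s.Finite) :
    s.offDiag.ncard = s.ncard * (s.ncard - 1) := by
  classical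
  rw [← hs.coe_toFinset, ← Finset.coe_offDiag, Set.ncard_coe_finset, Set.ncard_coe_finset,
    Finset.offDiag_card, Nat.mul_sub_one]

section Pairs

variable {α : Type*} {A : Set α}

theorem ncard_graph_sep {f : α → α} (hf : Set.MapsTo f A A) (p : α → Prop) :
    {ψ : α × α | (ψ.1 ∈ A ∧ ψ.2 ∈ A) ∧ ψ.2 = f ψ.1 ∧ p ψ.1}.ncard = {a ∈ A | p a}.ncard := by
  have hgraph : {ψ : α × α | (ψ.1 ∈ A ∧ ψ.2 ∈ A) ∧ ψ.2 = f ψ.1 ∧ p ψ.1} =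
      (fun a => (a, f a)) '' {a ∈ A | p a} := by
    ext ⟨a, b⟩
    constructor
    · rintro ⟨⟨ha, -⟩, hb, hp⟩
      exact ⟨a, ⟨ha, hp⟩, Prod.ext rfl hb.symm⟩
    · rintro ⟨a, ⟨ha, hp⟩, ⟨⟩⟩
      exact ⟨⟨ha, hf ha⟩, rfl, hp⟩
  rw [hgraph, Set.ncard_image_of_injective _ fun _ _ h => congrArg Prod.fst h]

theorem ncard_diag_sep (p : α → Prop) :
    {ψ : α × α | (ψ.1 ∈ A ∧ ψ.2 ∈ A) ∧ ψ.1 = ψ.2 ∧ p ψ.1}.ncard = {a ∈ A | p a}.ncard := by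
  convert ncard_graph_sep (Set.mapsTo_id A) p using 6
  exact eq_comm

theorem ncard_offDiag_sep (hA : A.Finite) (p : α → Prop) :
    {ψ : α × α | (ψ.1 ∈ A ∧ ψ.2 ∈ A) ∧ p ψ.1 ∧ p ψ.2 ∧ ψ.1 ≠ ψ.2}.ncard =
      {a ∈ A | p a}.ncard * ({a ∈ A | p a}.ncard - 1) := by
  rw [← Set.ncard_offDiag (hA.sep p)]
  congr 1
  ext ψ
  simp only [Set.mem_offDiag, Set.mem_ofPred_eq]
  tauto

end Pairs

theorem ncard_generic_pairs_add {A : Set ℂ} (hA : A.Finite) (hconj : Set.MapsTo conj A A) :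
    {ψ : ℂ × ℂ | (ψ.1 ∈ A ∧ ψ.2 ∈ A) ∧ ¬(ψ.1.im = 0 ∧ ψ.2.im = 0) ∧ ψ.1 ≠ ψ.2 ∧
        ψ.2 ≠ conj ψ.1}.ncard + 2 * {a ∈ A | a.im ≠ 0}.ncard +
      {a ∈ A | a.im = 0}.ncard ^ 2 = A.ncard ^ 2 := by
  set G := {ψ : ℂ × ℂ | (ψ.1 ∈ A ∧ ψ.2 ∈ A) ∧ ¬(ψ.1.im = 0 ∧ ψ.2.im = 0) ∧ ψ.1 ≠ ψ.2 ∧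
        ψ.2 ≠ conj ψ.1}
  set D := {ψ : ℂ × ℂ | (ψ.1 ∈ A ∧ ψ.2 ∈ A) ∧ ψ.1 = ψ.2 ∧ ψ.1.im ≠ 0}
  set C := {ψ : ℂ × ℂ | (ψ.1 ∈ A ∧ ψ.2 ∈ A) ∧ ψ.2 = conj ψ.1 ∧ ψ.1.im ≠ 0}
  set R := {a ∈ A | a.im = 0}
  have hpart : A ×ˢ A = ((G ∪ D) ∪ C) ∪ R ×ˢ R := by
    refine Set.Subset.antisymm (fun ⟨a, b⟩ hmem => ?_) ?_
    · by_cases hreal : a.im = 0 ∧ b.im = 0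
      · exact Or.inr ⟨⟨hmem.1, hreal.1⟩, hmem.2, hreal.2⟩
      by_cases hab : a = b
      · subst hab
        exact Or.inl (Or.inl (Or.inr ⟨hmem, rfl, fun h => hreal ⟨h, h⟩⟩))
      by_cases hc : b = conj a
      · refine Or.inl (Or.inr ⟨hmem, hc, fun h => hab ?_⟩)
        rw [hc, Complex.conj_eq_iff_im.2 h]
      · exact Or.inl (Or.inl (Or.inl ⟨hmem, hreal, hab, hc⟩))
    · rintro ψ (((h | h) | h) | ⟨⟨ha, -⟩, hb, -⟩)
      exacts [h.1, h.1, h.1, ⟨ha, hb⟩]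
  have hGD : Disjoint G D := Set.disjoint_left.2 fun _ hG hD => hG.2.2.1 hD.2.1
  have hGC : Disjoint G C := Set.disjoint_left.2 fun _ hG hC => hG.2.2.2 hC.2.1
  have hDC : Disjoint D C := Set.disjoint_left.2 fun _ hD hC =>
    hD.2.2 (Complex.conj_eq_iff_im.1 (hD.2.1.trans hC.2.1).symm)
  have hR : Disjoint (G ∪ D ∪ C) (R ×ˢ R) := Set.disjoint_left.2 fun ψ h hR => by
    rcases h with (h | h) | h
    exacts [h.2.1 ⟨hR.1.2, hR.2.2⟩, h.2.2 hR.1.2, h.2.2 hR.1.2]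
  have hfin : (G ∪ D ∪ C ∪ R ×ˢ R).Finite := hpart ▸ hA.prod hA
  obtain ⟨⟨⟨hGfin, hDfin⟩, hCfin⟩, hRfin⟩ := by simpa only [Set.finite_union] using hfin
  rw [sq, sq, ← Set.ncard_prod, ← Set.ncard_prod, hpart,
    Set.ncard_union_eq hR ((hGfin.union hDfin).union hCfin) hRfin,
    Set.ncard_union_eq (Set.disjoint_union_left.2 ⟨hGC, hDC⟩) (hGfin.union hDfin) hCfin,
    Set.ncard_union_eq hGD hGfin hDfin]
  have hD : D.ncard = {a ∈ A | a.im ≠ 0}.ncard := ncard_diag_sep (fun a : ℂ => a.im ≠ 0)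
  have hC : C.ncard = {a ∈ A | a.im ≠ 0}.ncard := ncard_graph_sep hconj (fun a : ℂ => a.im ≠ 0)
  omega

theorem eq_four_mul_of_add_sq_eq {x r s : ℕ} (h : x + 2 * (2 * s) + r ^ 2 = (r + 2 * s) ^ 2) :
    x = 4 * s * (s + r - 1) := by
  rcases s with _ | s
  · simpa using h
  · rw [show s + 1 + r - 1 = s + r by omega]
    nlinarith

theorem aeval_conj_eq_zero {P : ℚ[X]} {α : ℂ} (h : aeval α P = 0) : aeval (conj α) P = 0 := by
  simpa [h] using aeval_algHom_apply (starRingEnd ℂ).toRatAlgHom α P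

theorem bicomplex_root_classification_general (P : ℚ[X]) (hsep : P.Separable)
    (n r s : ℕ) (hdeg : P.natDegree = n)
    (hr : {α : ℂ | aeval α P = 0 ∧ α.im = 0}.ncard = r)
    (hn : n = r + 2 * s) :
    {ψ : ℂ × ℂ | (aeval ψ.1 P = 0 ∧ aeval ψ.2 P = 0) ∧
        ψ.1 = ψ.2 ∧ ψ.1.im = 0}.ncard = r ∧
    {ψ : ℂ × ℂ | (aeval ψ.1 P = 0 ∧ aeval ψ.2 P = 0) ∧
        ψ.1.im = 0 ∧ ψ.2.im = 0 ∧ ψ.1 ≠ ψ.2}.ncard = r * (r - 1) ∧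
    {ψ : ℂ × ℂ | (aeval ψ.1 P = 0 ∧ aeval ψ.2 P = 0) ∧
        ψ.1 = ψ.2 ∧ ψ.1.im ≠ 0}.ncard = 2 * s ∧
    {ψ : ℂ × ℂ | (aeval ψ.1 P = 0 ∧ aeval ψ.2 P = 0) ∧
        ψ.2 = (starRingEnd ℂ) ψ.1 ∧ ψ.1.im ≠ 0}.ncard = 2 * s ∧
    {ψ : ℂ × ℂ | (aeval ψ.1 P = 0 ∧ aeval ψ.2 P = 0) ∧
        ¬(ψ.1.im = 0 ∧ ψ.2.im = 0) ∧ ψ.1 ≠ ψ.2 ∧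
        ψ.2 ≠ (starRingEnd ℂ) ψ.1}.ncard = 4 * s * (s + r - 1) := by
  set A : Set ℂ := {α | aeval α P = 0}
  have hA : A = P.rootSet ℂ := Set.ext fun α => (mem_rootSet_of_ne hsep.ne_zero).symm
  have hAfin : A.Finite := hA ▸ P.rootSet_finite ℂ
  have hAcard : A.ncard = r + 2 * s := by
    rw [hA, ← Nat.card_coe_set_eq, Nat.card_eq_fintype_card,
      card_rootSet_eq_natDegree hsep (IsAlgClosed.splits _), hdeg, hn]
  have hconj : Set.MapsTo conj A A := fun _ => aeval_conj_eq_zero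
  have hreal : {α ∈ A | α.im = 0}.ncard = r := hr
  have hnonreal : {α ∈ A | α.im ≠ 0}.ncard = 2 * s := by
    have hsplit : {α ∈ A | α.im = 0}.ncard + {α ∈ A | α.im ≠ 0}.ncard = A.ncard :=
      Set.ncard_inter_add_ncard_sdiff_eq_ncard A {α | α.im = 0} hAfin
    omega
  have hcount := ncard_generic_pairs_add hAfin hconj
  rw [hnonreal, hreal, hAcard] at hcount
  exact ⟨(ncard_diag_sep (fun α : ℂ => α.im = 0)).trans hreal,
    (ncard_offDiag_sep hAfin (fun α : ℂ => α.im = 0)).trans (by rw [hreal]),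
    (ncard_diag_sep (fun α : ℂ => α.im ≠ 0)).trans hnonreal,
    (ncard_graph_sep hconj (fun α : ℂ => α.im ≠ 0)).trans hnonreal,
    eq_four_mul_of_add_sq_eq hcount⟩

/-- Classification of the `n²` bicomplex roots of a separable monic `P ∈ ℚ[X]`
of degree `n = r + 2s` with `r` real roots: `r` real roots, `r(r−1)` non-real
hyperbolic roots, `2s` non-real roots on the diagonal copy of ℂ, `2s` non-real
roots with conjugate components, and `4s(s+r−1)` roots in none of these classes. -/
theorem bicomplex_root_classification (P : ℚ[X]) (hP : P.Monic) (hsep : P.Separable)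
    (n r s : ℕ) (hdeg : P.natDegree = n)
    (hr : {α : ℂ | aeval α P = 0 ∧ α.im = 0}.ncard = r)
    (hn : n = r + 2 * s) :
    {ψ : ℂ × ℂ | (aeval ψ.1 P = 0 ∧ aeval ψ.2 P = 0) ∧
        ψ.1 = ψ.2 ∧ ψ.1.im = 0}.ncard = r ∧
    {ψ : ℂ × ℂ | (aeval ψ.1 P = 0 ∧ aeval ψ.2 P = 0) ∧
        ψ.1.im = 0 ∧ ψ.2.im = 0 ∧ ψ.1 ≠ ψ.2}.ncard = r * (r - 1) ∧
    {ψ : ℂ × ℂ | (aeval ψ.1 P = 0 ∧ aeval ψ.2 P = 0) ∧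
        ψ.1 = ψ.2 ∧ ψ.1.im ≠ 0}.ncard = 2 * s ∧
    {ψ : ℂ × ℂ | (aeval ψ.1 P = 0 ∧ aeval ψ.2 P = 0) ∧
        ψ.2 = (starRingEnd ℂ) ψ.1 ∧ ψ.1.im ≠ 0}.ncard = 2 * s ∧
    {ψ : ℂ × ℂ | (aeval ψ.1 P = 0 ∧ aeval ψ.2 P = 0) ∧
        ¬(ψ.1.im = 0 ∧ ψ.2.im = 0) ∧ ψ.1 ≠ ψ.2 ∧
        ψ.2 ≠ (starRingEnd ℂ) ψ.1}.ncard = 4 * s * (s + r - 1) :=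
  bicomplex_root_classification_general P hsep n r s hdeg hr hn
end

section
/- Every finite-dimensional ℚ-subalgebra L of the bicomplex numbers is generated by a single element: there exists ω ∈ L with L = ℚ[ω]. -/
/-!
If `L` contains the idempotent `(1, 0)`, then `L = L₁ × L₂` for the number fields `Lᵢ` cut out
by the two projections. Taking primitive elements `a` of `L₁` and `b` of `L₂` and shifting `b` by
a rational `t` so that `a` and `b + t` have coprime minimal polynomials, the Chinese remainder
theorem shows that `(a, b + t)` generates `L₁ × L₂`.
Otherwise the first projection is injective on `L`: a nonzero `(0, c) ∈ L` would give
`(0, 1) = (0, c) · p((0, c)) ∈ L`, where `c⁻¹ = p(c)`, and then `(1, 0) = 1 - (0, 1) ∈ L`. So `L`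
is isomorphic to the number field `L₁`, and any preimage of a primitive element of `L₁`
generates `L`.
-/

open Polynomial

namespace Subalgebra

section Map

variable {R A B : Type*} [CommSemiring R] [Semiring A] [Semiring B] [Algebra R A] [Algebra R B]

instance finite_map (S : Subalgebra R A) [Module.Finite R S] (f : A →ₐ[R] B) :
    Module.Finite R (S.map f) :=
  Module.Finite.map (toSubmodule S) f.toLinearMap

theorem adjoin_singleton_eq_of_injOn (f : A →ₐ[R] B) {S : Subalgebra R A} (hf : Set.InjOn f S)
    {x : A} (hx : x ∈ S) (h : Algebra.adjoin R {f x} = S.map f) : Algebra.adjoin R {x} = S := by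
  refine le_antisymm (Algebra.adjoin_singleton_le hx) fun y hy => ?_
  obtain ⟨z, hz, hzy⟩ : f y ∈ (Algebra.adjoin R {x}).map f := by
    rw [AlgHom.map_adjoin_singleton, h]
    exact mem_map.mpr ⟨y, hy, rfl⟩
  rwa [← hf (Algebra.adjoin_singleton_le hx hz) hy hzy]

end Map

theorem exists_adjoin_singleton_eq {K L : Type*} [Field K] [PerfectField K] [Field L]
    [Algebra K L] (S : Subalgebra K L) [FiniteDimensional K S] :
    ∃ a ∈ S, Algebra.adjoin K {a} = S := by
  let F : IntermediateField K L := Algebra.IsAlgebraic.toIntermediateField S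
  have : FiniteDimensional K F := ‹FiniteDimensional K S›
  obtain ⟨α, hα⟩ := Field.exists_primitive_element K F
  refine ⟨α, α.2, ?_⟩
  have := congrArg (map F.val)
    (Algebra.adjoin_eq_top_of_primitive_element (IsAlgebraic.of_finite K α) hα)
  rwa [AlgHom.map_adjoin_singleton, Algebra.map_top, F.range_val] at this

end Subalgebra

theorem Algebra.adjoin_singleton_add_algebraMap {R A : Type*} [CommRing R] [Ring A] [Algebra R A]
    (x : A) (r : R) : Algebra.adjoin R {x + algebraMap R A r} = Algebra.adjoin R {x} := by
  refine le_antisymm (Algebra.adjoin_singleton_le ?_) (Algebra.adjoin_singleton_le ?_)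
  · exact add_mem (Algebra.self_mem_adjoin_singleton R x) (Subalgebra.algebraMap_mem _ r)
  · simpa using sub_mem (Algebra.self_mem_adjoin_singleton R (x + algebraMap R A r))
      (Subalgebra.algebraMap_mem _ r)

theorem exists_aeval_add_algebraMap_ne_zero {K A : Type*} [Field K] [Infinite K] [CommRing A]
    [IsDomain A] [Algebra K A] {p : K[X]} (hp : p ≠ 0) (b : A) :
    ∃ t : K, aeval (b + algebraMap K A t) p ≠ 0 := by
  have hinj : Function.Injective fun t : K => b + algebraMap K A t :=
    fun s t hst => (algebraMap K A).injective (add_left_cancel hst)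
  obtain ⟨t, ht⟩ := ((p.rootSet_finite A).preimage hinj.injOn).infinite_compl.nonempty
  exact ⟨t, fun h => ht ((mem_rootSet_of_ne hp).mpr h)⟩

theorem minpoly.isCoprime_of_aeval_ne_zero {K A B : Type*} [Field K] [Ring A] [IsDomain A]
    [Ring B] [IsDomain B] [Algebra K A] [Algebra K B] {a : A} {b : B} (ha : IsIntegral K a)
    (hb : IsIntegral K b) (h : Polynomial.aeval b (minpoly K a) ≠ 0) :
    IsCoprime (minpoly K a) (minpoly K b) := by
  refine (minpoly.irreducible ha).coprime_iff_not_dvd.mpr fun hdvd => h ?_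
  obtain ⟨r, hr⟩ := (minpoly.irreducible ha).dvd_symm (minpoly.irreducible hb) hdvd
  rw [hr, map_mul, minpoly.aeval, zero_mul]

theorem Algebra.adjoin_singleton_prod_eq_prod {R A B : Type*} [CommRing R] [CommRing A]
    [CommRing B] [Algebra R A] [Algebra R B] {a : A} {b : B} {p q : R[X]} (hp : aeval a p = 0)
    (hq : aeval b q = 0) (hpq : IsCoprime p q) :
    Algebra.adjoin R {(a, b)} = (Algebra.adjoin R {a}).prod (Algebra.adjoin R {b}) := by
  refine le_antisymm (Algebra.adjoin_singleton_le (Subalgebra.mem_prod.mpr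
    ⟨Algebra.self_mem_adjoin_singleton R a, Algebra.self_mem_adjoin_singleton R b⟩)) ?_
  intro y hy
  obtain ⟨⟨f, hf⟩, ⟨g, hg⟩⟩ : y.1 ∈ (aeval a).range ∧ y.2 ∈ (aeval b).range := by
    simpa only [Subalgebra.mem_prod, Algebra.adjoin_singleton_eq_range_aeval] using hy
  obtain ⟨u, v, huv⟩ := hpq
  have hua := congrArg (aeval a) huv
  have hvb := congrArg (aeval b) huv
  simp only [map_add, map_mul, map_one, hp, hq, mul_zero, zero_add, add_zero] at hua hvb
  -- `v * q` and `u * p` evaluate at `(a, b)` to the idempotents `(1, 0)` and `(0, 1)`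
  have : y = aeval (a, b) (f * (v * q) + g * (u * p)) := by
    ext
    · simp [aeval_prod_apply, hp, hq, hua, ← show aeval a f = y.1 from hf]
    · simp [aeval_prod_apply, hp, hq, hvb, ← show aeval b g = y.2 from hg]
  rw [this]
  exact aeval_mem_adjoin_singleton R _

namespace Subalgebra

theorem exists_adjoin_singleton_eq_prod {K E₁ E₂ : Type*} [Field K] [PerfectField K]
    [Infinite K] [Field E₁] [Field E₂] [Algebra K E₁] [Algebra K E₂] (S₁ : Subalgebra K E₁)
    (S₂ : Subalgebra K E₂) [FiniteDimensional K S₁] [FiniteDimensional K S₂] :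
    ∃ ω ∈ S₁.prod S₂, Algebra.adjoin K {ω} = S₁.prod S₂ := by
  obtain ⟨a, ha, rfl⟩ := S₁.exists_adjoin_singleton_eq
  obtain ⟨b, hb, rfl⟩ := S₂.exists_adjoin_singleton_eq
  have haint : IsIntegral K a := (isIntegral_iff _).mp inferInstance a ha
  have hbint : IsIntegral K b := (isIntegral_iff _).mp inferInstance b hb
  obtain ⟨t, ht⟩ := exists_aeval_add_algebraMap_ne_zero (minpoly.ne_zero haint) b
  rw [← Algebra.adjoin_singleton_add_algebraMap b t]
  refine ⟨(a, b + algebraMap K E₂ t), mem_prod.mpr ⟨ha, Algebra.self_mem_adjoin_singleton K _⟩, ?_⟩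
  exact Algebra.adjoin_singleton_prod_eq_prod (minpoly.aeval K a) (minpoly.aeval K _)
    (minpoly.isCoprime_of_aeval_ne_zero haint (hbint.add isIntegral_algebraMap) ht)

theorem eq_prod_map_fst_snd {R A B : Type*} [CommRing R] [Ring A] [Ring B] [Algebra R A]
    [Algebra R B] (S : Subalgebra R (A × B)) (h : ((1, 0) : A × B) ∈ S) :
    S = (S.map (AlgHom.fst R A B)).prod (S.map (AlgHom.snd R A B)) := by
  have h' : ((0, 1) : A × B) ∈ S := by
    convert sub_mem S.one_mem h using 1
    ext <;> simp
  refine le_antisymm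
    (fun y hy => mem_prod.mpr ⟨mem_map.mpr ⟨y, hy, rfl⟩, mem_map.mpr ⟨y, hy, rfl⟩⟩) ?_
  intro y hy
  obtain ⟨⟨u, hu, hu₁⟩, ⟨v, hv, hv₂⟩⟩ := mem_prod.mp hy
  have : y = (1, 0) * u + (0, 1) * v := by
    ext
    · simpa using hu₁.symm
    · simpa using hv₂.symm
  rw [this]
  exact add_mem (mul_mem h hu) (mul_mem h' hv)

theorem mk_zero_one_mem_of_mk_zero_mem {K A B : Type*} [Field K] [Semiring A] [DivisionRing B]
    [Algebra K A] [Algebra K B] (S : Subalgebra K (A × B)) {c : B} (hc : IsIntegral K c)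
    (hc0 : c ≠ 0) (h : ((0, c) : A × B) ∈ S) : ((0, 1) : A × B) ∈ S := by
  obtain ⟨p, hp⟩ : c⁻¹ ∈ (aeval c).range :=
    Algebra.adjoin_singleton_eq_range_aeval K c ▸ hc.inv_mem_adjoin
  have : ((0, 1) : A × B) = (0, c) * aeval ((0, c) : A × B) p := by
    simp [aeval_prod_apply, show aeval c p = c⁻¹ from hp, hc0]
  rw [this]
  exact mul_mem h (Algebra.adjoin_singleton_le h (aeval_mem_adjoin_singleton K _))

theorem injOn_fst_of_mk_one_zero_notMem {K A B : Type*} [Field K] [Ring A] [DivisionRing B]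
    [Algebra K A] [Algebra K B] (S : Subalgebra K (A × B)) [Algebra.IsIntegral K S]
    (h : ((1, 0) : A × B) ∉ S) : Set.InjOn (AlgHom.fst K A B) S := by
  intro y hy z hz hyz
  have hd : y - z ∈ S := sub_mem hy hz
  have hd₁ : (y - z).1 = 0 := sub_eq_zero.mpr hyz
  by_contra hne
  have hd₂ : (y - z).2 ≠ 0 := fun h₂ => hne (sub_eq_zero.mp (Prod.ext hd₁ h₂))
  have h₀₁ := S.mk_zero_one_mem_of_mk_zero_mem
    ((S.isIntegral_iff.mp ‹_› _ hd).map (AlgHom.snd K A B)) hd₂ (by rwa [← hd₁])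
  refine h ?_
  convert sub_mem S.one_mem h₀₁ using 1
  ext <;> simp

end Subalgebra

/-- Every finite-dimensional unital ℚ-subalgebra of the bicomplex numbers
`ℂ × ℂ` is generated by a single element. -/
theorem bicomplex_extension_simple (L : Subalgebra ℚ (ℂ × ℂ))
    (hL : FiniteDimensional ℚ L) :
    ∃ ω ∈ L, Algebra.adjoin ℚ {ω} = L := by
  by_cases h : ((1, 0) : ℂ × ℂ) ∈ L
  · rw [L.eq_prod_map_fst_snd h]
    exact Subalgebra.exists_adjoin_singleton_eq_prod _ _
  · obtain ⟨a, ha, hadj⟩ := (L.map (AlgHom.fst ℚ ℂ ℂ)).exists_adjoin_singleton_eq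
    obtain ⟨x, hx, rfl⟩ := Subalgebra.mem_map.mp ha
    exact ⟨x, hx, Subalgebra.adjoin_singleton_eq_of_injOn _
      (L.injOn_fst_of_mk_one_zero_notMem h) hx hadj⟩
end
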